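/- arXiv:1609.07522 — 5 statements merged into one kernel-verified Lean document; each statement's English description precedes it below -/
import Mathlib

section
/- Let X be a set, I an index set, and (O_{ij})_{i,j∈I} a family of subsets of X satisfying: (O1) O_{ii} = ∅ for all i ∈ I; (O2) O_{ij} ∩ O_{jk} ⊆ O_{ik} for all i, j, k ∈ I; and the weak condition O_{ik} ⊆ O_{ij} ∪ O_{ji} ∪ O_{jk} ∪ O_{kj} for all i, j, k ∈ I. Then the family also satisfies (O3): O_{ik} ⊆ O_{ij} ∪ O_{jk} for all i, j, k ∈ I. -/
/-- For a family `(O i j)` of subsets of `X` satisfying (O1) `O i i = ∅`,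
(O2) `O i j ∩ O j k ⊆ O i k`, and the weak condition
`O i k ⊆ O i j ∪ O j i ∪ O j k ∪ O k j`, condition (O3) `O i k ⊆ O i j ∪ O j k` holds. -/
theorem stmt_0 {X I : Type*} (O : I → I → Set X)
    (hO1 : ∀ i, O i i = ∅)
    (hO2 : ∀ i j k, O i j ∩ O j k ⊆ O i k)
    (hweak : ∀ i j k, O i k ⊆ O i j ∪ O j i ∪ O j k ∪ O k j) :
    ∀ i j k, O i k ⊆ O i j ∪ O j k := by
  intro i j k x hx
  rcases hweak i j k hx with (((h | h) | h) | h)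
  · exact Or.inl h
  · exact Or.inr (hO2 j i k ⟨h, hx⟩)
  · exact Or.inr h
  · exact Or.inl (hO2 i k j ⟨hx, h⟩)
end

section
/- Let M be a linearly ordered additive abelian group that is a ℚ-vector space, and let a, b, c, e ∈ M. If a < b and e ≠ 0, then a < H(a, b, c, e) < b. -/
/-! `H(a,b,c,e) - a` is the average of `x = u ⊓ (b - a)` and `y = u ⊓ (((b - a) - |e|) ⊔ 0)`
with `u = |c - a| + |e| > 0`. Here `0 < x ≤ b - a` and `0 ≤ y < b - a`, the latter because
`|e| > 0`, so the average lies strictly between `0` and `b - a`. -/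

/-- The mixing function of Construction 2.3:
`H(a,b,c,e) = a + (1/2)•((|c−a|+|e|) ⊓ (b−a)) + (1/2)•((|c−a|+|e|) ⊓ (((b−a)−|e|) ⊔ 0))`. -/
def mixH {M : Type*} [AddCommGroup M] [LinearOrder M] [IsOrderedAddMonoid M] [Module ℚ M] (a b c e : M) : M :=
  a + (1/2 : ℚ) • ((|c - a| + |e|) ⊓ (b - a))
    + (1/2 : ℚ) • ((|c - a| + |e|) ⊓ (((b - a) - |e|) ⊔ 0))

section RatModule

variable {M : Type*} [AddCommGroup M] [LinearOrder M] [IsOrderedAddMonoid M] [Module ℚ M]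

/-- Clearing the denominator of `q` reduces positivity of `q • x` to that of `q.num • x`. -/
theorem Rat.smul_pos_of_pos {q : ℚ} {x : M} (hq : 0 < q) (hx : 0 < x) : 0 < q • x := by
  by_contra! hqx
  have hnum : q.den • (q • x) = q.num • x := by
    rw [← Nat.cast_smul_eq_nsmul ℚ, smul_smul, Rat.den_mul_eq_num, Int.cast_smul_eq_zsmul]
  exact (hnum ▸ nsmul_nonpos hqx q.den).not_gt (zsmul_pos hx (Rat.num_pos.2 hq))

instance IsOrderedAddMonoid.toPosSMulStrictMono_rat : PosSMulStrictMono ℚ M where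
  smul_lt_smul_of_pos_left _ hq _ _ hxy := by
    simpa only [smul_sub, sub_pos] using Rat.smul_pos_of_pos hq (sub_pos.2 hxy)

theorem half_smul_add_half_smul_mem_Ioo {x y d : M} (hx : 0 < x) (hxd : x ≤ d) (hy : 0 ≤ y)
    (hyd : y < d) : (1/2 : ℚ) • x + (1/2 : ℚ) • y ∈ Set.Ioo 0 d := by
  refine ⟨add_pos_of_pos_of_nonneg (smul_pos (by norm_num) hx) (smul_nonneg (by norm_num) hy), ?_⟩
  calc (1/2 : ℚ) • x + (1/2 : ℚ) • y
      < (1/2 : ℚ) • d + (1/2 : ℚ) • d :=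
        add_lt_add_of_le_of_lt (smul_le_smul_of_nonneg_left hxd (by norm_num))
          (smul_lt_smul_of_pos_left hyd (by norm_num))
    _ = d := by rw [← add_smul]; norm_num

end RatModule

/-- If `a < b` and `e ≠ 0` then `a < H(a,b,c,e) < b`. -/
theorem stmt_5 {M : Type*} [AddCommGroup M] [LinearOrder M] [IsOrderedAddMonoid M] [Module ℚ M]
    (a b c e : M) (hab : a < b) (he : e ≠ 0) :
    a < mixH a b c e ∧ mixH a b c e < b := by
  have hu : 0 < |c - a| + |e| := add_pos_of_nonneg_of_pos (abs_nonneg _) (abs_pos.2 he)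
  have hd : 0 < b - a := sub_pos.2 hab
  have hy : (|c - a| + |e|) ⊓ (((b - a) - |e|) ⊔ 0) < b - a :=
    inf_le_right.trans_lt (max_lt (sub_lt_self _ (abs_pos.2 he)) hd)
  obtain ⟨hpos, hlt⟩ := half_smul_add_half_smul_mem_Ioo (lt_inf_iff.2 ⟨hu, hd⟩) inf_le_right
    (le_inf hu.le le_sup_right) hy
  rw [mixH, add_assoc]
  exact ⟨lt_add_of_pos_right a hpos, lt_sub_iff_add_lt'.1 hlt⟩
end

section
/- Let X be a Hausdorff topological space and M a divisible ordered abelian group (a linearly ordered additive abelian group that is a ℚ-vector space) equipped with its order topology. Let U ⊆ X be open and A, B ⊆ X closed with A ∪ B = X \ U, and suppose there is a continuous function d : X → M whose zero set {x : d(x) = 0} equals A ∪ B. Let F, G, h : X → M be continuous functions such that F ≤ G pointwise, F(u) < G(u) for all u ∈ U, h(x) = F(x) for all x ∈ A, and h(x) = G(x) for all x ∈ B. Define H : X → M by H = F + (1/2)•((|h − F| + |d|) ⊓ (G − F)) + (1/2)•((|h − F| + |d|) ⊓ (((G − F) − |d|) ⊔ 0)), with pointwise operations, where ⊓ and ⊔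 denote pointwise minimum and maximum and |·| the pointwise absolute value. Then H(x) = h(x) for all x ∈ A ∪ B, and F(u) < H(u) < G(u) for all u ∈ U. -/
/-!
Write `c = G - F ≥ 0` and `t = |h - F| + |d|`, so that `H = F + ½ (t ⊓ c) + ½ (t ⊓ ((c - |d|) ⊔ 0))`.
On `A ∪ B` we have `d = 0`: on `A` also `t = 0`, so `H = F = h`, and on `B` also `t = c`, so
`H = F + c = G = h`. On `U` we have `|d| > 0` and `c > 0`: the first summand lies in `(0, c]` and
the second in `[0, c)`, so `F < H < F + c = G`.
-/

lemma half_smul_add_half_smul {M : Type*} [AddCommGroup M] [Module ℚ M] (a : M) :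
    (1 / 2 : ℚ) • a + (1 / 2 : ℚ) • a = a := by
  rw [← add_smul]; norm_num

section MixedFunction

variable {M : Type*} [AddCommGroup M] [LinearOrder M] [IsOrderedAddMonoid M] [Module ℚ M]

instance posSMulStrictMono_rat_of_isOrderedAddMonoid : PosSMulStrictMono ℚ M where
  smul_lt_smul_of_pos_left q hq a b hab := by
    -- scaling by `q.den` turns `q • (b - a)` into the positive integer multiple `q.num • (b - a)`
    rw [← sub_pos, ← smul_sub]
    have hden : (q.den : ℚ) • q • (b - a) = q.num • (b - a) := by
      rw [smul_smul, Rat.den_mul_eq_num, Int.cast_smul_eq_zsmul]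
    rw [← nsmul_pos_iff q.den_ne_zero, ← Nat.cast_smul_eq_nsmul ℚ, hden]
    exact zsmul_pos (sub_pos.2 hab) (Rat.num_pos.2 hq)

lemma half_smul_add_half_smul_lt {a b c : M} (ha : a ≤ c) (hb : b < c) :
    (1 / 2 : ℚ) • a + (1 / 2 : ℚ) • b < c :=
  calc (1 / 2 : ℚ) • a + (1 / 2 : ℚ) • b < (1 / 2 : ℚ) • c + (1 / 2 : ℚ) • c :=
        add_lt_add_of_le_of_lt (smul_le_smul_of_nonneg_left ha (by norm_num))
          (smul_lt_smul_of_pos_left hb (by norm_num))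
    _ = c := half_smul_add_half_smul c

/-- `mixedValue (F x) (G x) (h x) (d x)` is the value at `x` of the mixed function `H` of
Construction 2.3. -/
def mixedValue (f g k e : M) : M :=
  f + (1 / 2 : ℚ) • ((|k - f| + |e|) ⊓ (g - f))
    + (1 / 2 : ℚ) • ((|k - f| + |e|) ⊓ (((g - f) - |e|) ⊔ 0))

lemma mixedValue_self_zero {f g : M} (hfg : f ≤ g) : mixedValue f g f 0 = f := by
  simp [mixedValue, sub_nonneg.2 hfg]

lemma mixedValue_zero_of_le {f g : M} (hfg : f ≤ g) : mixedValue f g g 0 = g := by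
  have hc : 0 ≤ g - f := sub_nonneg.2 hfg
  rw [mixedValue, abs_of_nonneg hc, abs_zero, add_zero, sub_zero, sup_eq_left.2 hc, inf_idem,
    add_assoc, half_smul_add_half_smul, add_sub_cancel]

lemma lt_mixedValue {f g : M} (hfg : f < g) (k : M) {e : M} (he : e ≠ 0) :
    f < mixedValue f g k e := by
  have ht : 0 < |k - f| + |e| := add_pos_of_nonneg_of_pos (abs_nonneg _) (abs_pos.2 he)
  have hfirst : 0 < (|k - f| + |e|) ⊓ (g - f) := lt_inf_iff.2 ⟨ht, sub_pos.2 hfg⟩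
  have hsecond : 0 ≤ (|k - f| + |e|) ⊓ (((g - f) - |e|) ⊔ 0) := le_inf ht.le le_sup_right
  rw [mixedValue, add_assoc]
  exact lt_add_of_pos_right f <| add_pos_of_pos_of_nonneg
    (smul_pos (by norm_num) hfirst) (smul_nonneg (by norm_num) hsecond)

lemma mixedValue_lt {f g : M} (hfg : f < g) (k : M) {e : M} (he : e ≠ 0) :
    mixedValue f g k e < g := by
  have hc : 0 < g - f := sub_pos.2 hfg
  have hsecond : (|k - f| + |e|) ⊓ (((g - f) - |e|) ⊔ 0) < g - f :=
    inf_le_right.trans_lt (sup_lt_iff.2 ⟨sub_lt_self _ (abs_pos.2 he), hc⟩)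
  rw [mixedValue, add_assoc, ← lt_sub_iff_add_lt']
  exact half_smul_add_half_smul_lt inf_le_right hsecond

end MixedFunction

theorem stmt_6_general {X M : Type*}
    [AddCommGroup M] [LinearOrder M] [IsOrderedAddMonoid M] [Module ℚ M]
    (U : Set X)
    (A B : Set X) (hAB : A ∪ B = Uᶜ)
    (d : X → M) (hdzero : {x | d x = 0} = A ∪ B)
    (F G h : X → M)
    (hFG : ∀ x, F x ≤ G x) (hFGU : ∀ u ∈ U, F u < G u)
    (hhA : ∀ x ∈ A, h x = F x) (hhB : ∀ x ∈ B, h x = G x)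
    (H : X → M)
    (hH : ∀ x, H x =
      F x + (1/2 : ℚ) • ((|h x - F x| + |d x|) ⊓ (G x - F x))
          + (1/2 : ℚ) • ((|h x - F x| + |d x|) ⊓ (((G x - F x) - |d x|) ⊔ 0))) :
    (∀ x ∈ A ∪ B, H x = h x) ∧ (∀ u ∈ U, F u < H u ∧ H u < G u) := by
  have hH_eq (x : X) : H x = mixedValue (F x) (G x) (h x) (d x) := hH x
  refine ⟨fun x hx => ?_, fun u hu => ?_⟩
  · have hdx : d x = 0 := by rw [← hdzero] at hx; exact hx
    rw [hH_eq, hdx]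
    rcases hx with hxA | hxB
    · rw [hhA x hxA, mixedValue_self_zero (hFG x)]
    · rw [hhB x hxB, mixedValue_zero_of_le (hFG x)]
  · have hdu : d u ≠ 0 := fun h0 => (hAB ▸ hdzero ▸ h0 : u ∈ Uᶜ) hu
    rw [hH_eq]
    exact ⟨lt_mixedValue (hFGU u hu) _ hdu, mixedValue_lt (hFGU u hu) _ hdu⟩

/-- Construction 2.3 of the paper: mixing continuous functions. -/
theorem stmt_6 {X M : Type*} [TopologicalSpace X] [T2Space X]
    [AddCommGroup M] [LinearOrder M] [IsOrderedAddMonoid M] [Module ℚ M]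
    [TopologicalSpace M] [OrderTopology M]
    (U : Set X) (hU : IsOpen U)
    (A B : Set X) (hA : IsClosed A) (hB : IsClosed B) (hAB : A ∪ B = Uᶜ)
    (d : X → M) (hd : Continuous d) (hdzero : {x | d x = 0} = A ∪ B)
    (F G h : X → M) (hF : Continuous F) (hG : Continuous G) (hh : Continuous h)
    (hFG : ∀ x, F x ≤ G x) (hFGU : ∀ u ∈ U, F u < G u)
    (hhA : ∀ x ∈ A, h x = F x) (hhB : ∀ x ∈ B, h x = G x)
    (H : X → M)
    (hH : ∀ x, H x =
      F x + (1/2 : ℚ) • ((|h x - F x| + |d x|) ⊓ (G x - F x))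
          + (1/2 : ℚ) • ((|h x - F x| + |d x|) ⊓ (((G x - F x) - |d x|) ⊔ 0))) :
    (∀ x ∈ A ∪ B, H x = h x) ∧ (∀ u ∈ U, F u < H u ∧ H u < G u) :=
  stmt_6_general U A B hAB d hdzero F G h hFG hFGU hhA hhB H hH
end

section
/- Let C be a constructible ℓ-group of continuous functions X → M, let n, k ∈ ℕ, and let (O_{ij})_{i,j∈{1,…,n+k}} be an open sign condition on X all of whose members are C-cozero sets. Suppose there are f_1, …, f_n ∈ C such that O_{ij} = {x ∈ X : f_i(x) < f_j(x)} for all i, j ∈ {1,…,n}. Then there exist f_{n+1}, …, f_{n+k} ∈ C such that O_{ij} = {x ∈ X : f_i(x) < f_j(x)} for all i, j ∈ {1,…,n+k}. -/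
open Set

variable {X M : Type*} [TopologicalSpace X] [T2Space X]
  [AddCommGroup M] [LinearOrder M] [IsOrderedAddMonoid M] [Module ℚ M] [TopologicalSpace M] [OrderTopology M]

/-- A `C`-zero set: the zero set of a member of `C`. -/
def IsZeroSetOf (C : Set (X → M)) (Z : Set X) : Prop := ∃ f ∈ C, Z = {x | f x = 0}

/-- A `C`-cozero set: the complement of a `C`-zero set. -/
def IsCozeroSetOf (C : Set (X → M)) (U : Set X) : Prop := ∃ f ∈ C, U = {x | f x ≠ 0}

/-- A `C`-constructible set: a finite Boolean combination of `C`-zero sets. -/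
inductive IsConstructibleIn (C : Set (X → M)) : Set X → Prop
  | zeroSet {Z : Set X} : IsZeroSetOf C Z → IsConstructibleIn C Z
  | compl {Z : Set X} : IsConstructibleIn C Z → IsConstructibleIn C Zᶜ
  | union {Z W : Set X} : IsConstructibleIn C Z → IsConstructibleIn C W →
      IsConstructibleIn C (Z ∪ W)

/-- A `C`-constructible function on `Z`: `Z` is covered by finitely many
`C`-constructible sets `Zs i` on each of which `g` agrees with a member of `C`. -/
def IsConstructibleFunOn (C : Set (X → M)) (Z : Set X) (g : X → M) : Prop :=
  ∃ (n : ℕ) (Zs : Fin n → Set X) (fs : Fin n → X → M),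
    (∀ i, IsConstructibleIn C (Zs i)) ∧ (⋃ i, Zs i) = Z ∧
    (∀ i, fs i ∈ C) ∧ (∀ i, ∀ x ∈ Zs i, g x = fs i x)

/-- A constructible ℓ-group of continuous functions `X → M` (Definition 2.1 of the
paper): a `ℚ`-vector sublattice of continuous functions `X → M` satisfying the
conditions (C1)–(C4). -/
structure ConstructibleLGroup (X M : Type*) [TopologicalSpace X] [T2Space X]
    [AddCommGroup M] [LinearOrder M] [IsOrderedAddMonoid M] [Module ℚ M] [TopologicalSpace M] [OrderTopology M] where
  carrier : Set (X → M)
  continuous_mem : ∀ f ∈ carrier, Continuous f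
  zero_mem : (0 : X → M) ∈ carrier
  add_mem : ∀ f ∈ carrier, ∀ g ∈ carrier, f + g ∈ carrier
  neg_mem : ∀ f ∈ carrier, -f ∈ carrier
  smul_mem : ∀ (q : ℚ), ∀ f ∈ carrier, q • f ∈ carrier
  sup_mem : ∀ f ∈ carrier, ∀ g ∈ carrier, f ⊔ g ∈ carrier
  inf_mem : ∀ f ∈ carrier, ∀ g ∈ carrier, f ⊓ g ∈ carrier
  /-- (C1) Every closed `C`-constructible set is a `C`-zero set. -/
  c1 : ∀ Z : Set X, IsClosed Z → IsConstructibleIn carrier Z → IsZeroSetOf carrier Z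
  /-- (C2) The closure of every `C`-cozero set is `C`-constructible. -/
  c2 : ∀ U : Set X, IsCozeroSetOf carrier U → IsConstructibleIn carrier (closure U)
  /-- (C3) Continuous `C`-constructible functions on closed `C`-constructible
  sets extend to members of `C`. -/
  c3 : ∀ A : Set X, IsClosed A → IsConstructibleIn carrier A →
    ∀ g : X → M, ContinuousOn g A → IsConstructibleFunOn carrier A g →
      ∃ f ∈ carrier, ∀ x ∈ A, f x = g x
  /-- (C4) Glueing over finite closed `C`-constructible covers of `X`. -/
  c4 : ∀ (n : ℕ) (A : Fin n → Set X), (∀ i, IsClosed (A i)) →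
    (∀ i, IsConstructibleIn carrier (A i)) → (⋃ i, A i) = univ →
    ∀ f : X → M, (∀ i, ContinuousOn f (A i) ∧ IsConstructibleFunOn carrier (A i) f) →
      f ∈ carrier

/-!
Adding one index `m` at a time, it suffices to find `g ∈ C` with `O i m = {f i < g}` and
`O m i = {g < f i}`. Off both sets `g` must equal `f i`; these prescribed values are compatible
and extend by (C3) to some `Θ ∈ C`. On a sign cell, where the set of `i` with `f i < g` is a
fixed `S`, clamp `Θ` between `f i + δ i / 2` for `i ∈ S` and `f j - ε j / 2` for `j ∉ S`, where
the gaps `δ i, ε j ∈ C` vanish off `O i m`, `O m j` and are small enough that the bounds never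
cross. Each clamp agrees with `Θ` where the closure of its cell meets the prescribed locus, so
(C4) glues `Θ` and the clamps into `g`.
-/

theorem inv_two_smul_add_inv_two_smul {G : Type*} [AddCommGroup G] [Module ℚ G] (m : G) :
    (2⁻¹ : ℚ) • m + (2⁻¹ : ℚ) • m = m := by
  rw [← add_smul]
  norm_num

theorem inv_two_smul_pos {G : Type*} [AddCommGroup G] [LinearOrder G] [IsOrderedAddMonoid G]
    [Module ℚ G] {m : G} (hm : 0 < m) : 0 < (2⁻¹ : ℚ) • m :=
  (nsmul_pos_iff two_ne_zero).1 (by rwa [two_nsmul, inv_two_smul_add_inv_two_smul])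

theorem le_of_add_self_le_add {G : Type*} [AddCommGroup G] [LinearOrder G] [IsOrderedAddMonoid G]
    {a b c : G} (h : a + a ≤ b + c) (hbc : b ≤ c) : a ≤ c :=
  not_lt.1 fun hca => (add_lt_add hca hca).not_ge (h.trans (add_le_add hbc le_rfl))

theorem le_of_add_le_add_self {G : Type*} [AddCommGroup G] [LinearOrder G] [IsOrderedAddMonoid G]
    {a b c : G} (h : b + c ≤ a + a) (hcb : c ≤ b) : c ≤ a :=
  not_lt.1 fun hac => (add_lt_add hac hac).not_ge ((add_le_add hcb le_rfl).trans h)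

theorem Finset.fold_mem_of_forall_mem {ι β : Type*} {op : β → β → β} [Std.Commutative op]
    [Std.Associative op] {s : Set β} (hop : ∀ a ∈ s, ∀ b ∈ s, op a b ∈ s) {t : Finset ι} {b : β}
    {f : ι → β} (hb : b ∈ s) (hf : ∀ i ∈ t, f i ∈ s) : t.fold op b f ∈ s := by
  induction t using Finset.cons_induction with
  | empty => exact hb
  | cons a t ha ih =>
    rw [Finset.fold_cons]
    exact hop _ (hf a (Finset.mem_cons_self a t)) _
      (ih fun i hi => hf i (Finset.mem_cons_of_mem hi))

section SignClamp

variable {ι : Type*} [Fintype ι] [DecidableEq ι]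

def signClamp {β : Type*} [Lattice β] (S : Finset ι) (t : β) (lo hi : ι → β) : β :=
  Sᶜ.fold (· ⊓ ·) (S.fold (· ⊔ ·) t lo) hi

theorem signClamp_apply {Y β : Type*} [Lattice β] (S : Finset ι) (t : Y → β)
    (lo hi : ι → Y → β) (y : Y) :
    signClamp S t lo hi y = signClamp S (t y) (fun i => lo i y) (fun i => hi i y) := by
  unfold signClamp
  rw [← Finset.fold_hom (op := ((· ⊓ ·) : (Y → β) → _)) (op' := (· ⊓ ·)) (m := (· y))
      fun _ _ => rfl,
    ← Finset.fold_hom (op := ((· ⊔ ·) : (Y → β) → _)) (op' := (· ⊔ ·)) (m := (· y))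
      fun _ _ => rfl]

theorem signClamp_mem {β : Type*} [Lattice β] {s : Set β} (hsup : SupClosed s)
    (hinf : InfClosed s) {S : Finset ι} {t : β} {lo hi : ι → β} (ht : t ∈ s) (hlo : ∀ i, lo i ∈ s)
    (hhi : ∀ i, hi i ∈ s) : signClamp S t lo hi ∈ s :=
  Finset.fold_mem_of_forall_mem (fun _ ha _ hb => hinf ha hb)
    (Finset.fold_mem_of_forall_mem (fun _ ha _ hb => hsup ha hb) ht fun i _ => hlo i)
    fun i _ => hhi i

variable {α : Type*} [LinearOrder α] {S : Finset ι} {t : α} {lo hi : ι → α}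

theorem le_signClamp (h : ∀ i ∈ S, ∀ j ∉ S, lo i ≤ hi j) {i : ι} (hiS : i ∈ S) :
    lo i ≤ signClamp S t lo hi :=
  (Finset.le_fold_min _).2 ⟨(Finset.le_fold_max _).2 (Or.inr ⟨i, hiS, le_rfl⟩),
    fun j hj => h i hiS j (Finset.mem_compl.1 hj)⟩

theorem signClamp_le {j : ι} (hj : j ∉ S) : signClamp S t lo hi ≤ hi j :=
  (Finset.fold_min_le _).2 (Or.inr ⟨j, Finset.mem_compl.2 hj, le_rfl⟩)

theorem signClamp_eq_self (hlo : ∀ i ∈ S, lo i ≤ t) (hhi : ∀ j ∉ S, t ≤ hi j) :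
    signClamp S t lo hi = t := by
  have hmax : S.fold max t lo = t :=
    le_antisymm ((Finset.fold_max_le _).2 ⟨le_rfl, hlo⟩)
      ((Finset.le_fold_max _).2 (Or.inl le_rfl))
  have hmin : Sᶜ.fold min t hi = t :=
    le_antisymm ((Finset.fold_min_le _).2 (Or.inl le_rfl))
      ((Finset.le_fold_min _).2 ⟨le_rfl, fun j hj => hhi j (Finset.mem_compl.1 hj)⟩)
  exact (congrArg (fun b => Sᶜ.fold min b hi) hmax).trans hmin

end SignClamp

section Constructible

variable {X M : Type*} [AddCommGroup M] {C : Set (X → M)}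

theorem IsCozeroSetOf.isConstructibleIn {U : Set X} (hU : IsCozeroSetOf C U) :
    IsConstructibleIn C U := by
  obtain ⟨e, he, rfl⟩ := hU
  exact (IsConstructibleIn.zeroSet ⟨e, he, rfl⟩).compl

theorem isConstructibleFunOn_iUnion {κ : Type*} [Finite κ] {Z : κ → Set X}
    (hZ : ∀ k, IsConstructibleIn C (Z k)) {f : κ → X → M} (hf : ∀ k, f k ∈ C) {g : X → M}
    (hg : ∀ k, EqOn g (f k) (Z k)) : IsConstructibleFunOn C (⋃ k, Z k) g := by
  obtain ⟨n, ⟨e⟩⟩ := Finite.exists_equiv_fin κ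
  exact ⟨n, Z ∘ e.symm, f ∘ e.symm, fun i => hZ _, e.symm.surjective.iUnion_comp Z,
    fun i => hf _, fun i _ hx => hg _ hx⟩

end Constructible

namespace ConstructibleLGroup

variable (C : ConstructibleLGroup X M)

theorem supClosed : SupClosed C.carrier := fun _ hf _ hg => C.sup_mem _ hf _ hg

theorem infClosed : InfClosed C.carrier := fun _ hf _ hg => C.inf_mem _ hf _ hg

variable {C}

theorem sub_mem {f g : X → M} (hf : f ∈ C.carrier) (hg : g ∈ C.carrier) :
    f - g ∈ C.carrier := by
  simpa only [sub_eq_add_neg] using C.add_mem _ hf _ (C.neg_mem _ hg)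

theorem abs_mem {f : X → M} (hf : f ∈ C.carrier) : |f| ∈ C.carrier :=
  C.sup_mem _ hf _ (C.neg_mem _ hf)

theorem isOpen_of_isCozeroSetOf {U : Set X} (hU : IsCozeroSetOf C.carrier U) : IsOpen U := by
  obtain ⟨e, he, rfl⟩ := hU
  exact isOpen_ne_fun (C.continuous_mem e he) continuous_const

theorem exists_nonneg_of_isCozeroSetOf {U : Set X} (hU : IsCozeroSetOf C.carrier U) :
    ∃ φ ∈ C.carrier, 0 ≤ φ ∧ U = {x | 0 < φ x} := by
  obtain ⟨e, he, rfl⟩ := hU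
  exact ⟨|e|, abs_mem he, fun x => abs_nonneg (e x), by ext x; simp⟩

variable (C)

theorem isConstructibleIn_univ : IsConstructibleIn C.carrier (univ : Set X) :=
  .zeroSet ⟨0, C.zero_mem, by ext; simp⟩

theorem isConstructibleIn_iUnion {κ : Type*} [Finite κ] {Z : κ → Set X}
    (hZ : ∀ k, IsConstructibleIn C.carrier (Z k)) : IsConstructibleIn C.carrier (⋃ k, Z k) := by
  have := Fintype.ofFinite κ
  classical
  suffices ∀ s : Finset κ, IsConstructibleIn C.carrier (⋃ k ∈ s, Z k) by
    simpa using this Finset.univ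
  intro s
  induction s using Finset.induction_on with
  | empty => simpa using C.isConstructibleIn_univ.compl
  | insert k s _ ih => simpa only [Finset.set_biUnion_insert] using (hZ k).union ih

theorem isCozeroSetOf_iInter {κ : Type*} [Finite κ] [Nonempty κ] {U : κ → Set X}
    (hU : ∀ k, IsCozeroSetOf C.carrier (U k)) : IsCozeroSetOf C.carrier (⋂ k, U k) := by
  have := Fintype.ofFinite κ
  choose φ hφC hφ0 hφU using fun k => exists_nonneg_of_isCozeroSetOf (hU k)
  refine ⟨Finset.univ.inf' Finset.univ_nonempty φ,
    C.infClosed.finsetInf'_mem _ fun k _ => hφC k, ?_⟩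
  ext x
  have h0 : 0 ≤ Finset.univ.inf' Finset.univ_nonempty (φ · x) :=
    (Finset.le_inf'_iff _ _).2 fun k _ => hφ0 k x
  rw [mem_ofPred, Finset.inf'_apply, ← h0.lt_iff_ne', Finset.lt_inf'_iff, mem_iInter]
  simp [hφU]

theorem isConstructibleIn_closure_iInter {κ : Type*} [Finite κ] {U : κ → Set X}
    (hU : ∀ k, IsCozeroSetOf C.carrier (U k)) :
    IsConstructibleIn C.carrier (closure (⋂ k, U k)) := by
  cases isEmpty_or_nonempty κ
  · simpa using C.isConstructibleIn_univ
  · exact C.c2 _ (C.isCozeroSetOf_iInter hU)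

theorem mem_of_eqOn_cover {κ : Type*} [Finite κ] {A : κ → Set X} (hA : ∀ k, IsClosed (A k))
    (hAC : ∀ k, IsConstructibleIn C.carrier (A k)) (hcover : ⋃ k, A k = univ)
    {f : κ → X → M} (hf : ∀ k, f k ∈ C.carrier) {g : X → M} (hg : ∀ k, EqOn g (f k) (A k)) :
    g ∈ C.carrier := by
  obtain ⟨n, ⟨e⟩⟩ := Finite.exists_equiv_fin κ
  refine C.c4 n (A ∘ e.symm) (fun i => hA _) (fun i => hAC _)
    (by rwa [← e.symm.surjective.iUnion_comp] at hcover) g fun i =>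
      ⟨(C.continuous_mem _ (hf _)).continuousOn.congr (hg _), ?_⟩
  simpa only [iUnion_const, Function.comp_apply] using
    isConstructibleFunOn_iUnion (κ := Unit) (fun _ => hAC (e.symm i)) (fun _ => hf (e.symm i))
      fun _ => hg (e.symm i)

theorem exists_mem_eqOn_of_isClosed {κ : Type*} [Finite κ] {Z : κ → Set X}
    (hZ : ∀ k, IsClosed (Z k)) (hZC : ∀ k, IsConstructibleIn C.carrier (Z k))
    {f : κ → X → M} (hf : ∀ k, f k ∈ C.carrier)
    (hagree : ∀ k l, EqOn (f k) (f l) (Z k ∩ Z l)) :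
    ∃ θ ∈ C.carrier, ∀ k, EqOn θ (f k) (Z k) := by
  classical
  let g : X → M := fun x => if hx : ∃ k, x ∈ Z k then f hx.choose x else 0
  have hg : ∀ k, EqOn g (f k) (Z k) := fun k x hx => by
    have hex : ∃ k, x ∈ Z k := ⟨k, hx⟩
    simp only [g, dif_pos hex]
    exact hagree _ _ ⟨hex.choose_spec, hx⟩
  obtain ⟨θ, hθC, hθ⟩ := C.c3 (⋃ k, Z k) (isClosed_iUnion_of_finite hZ)
    (C.isConstructibleIn_iUnion hZC) g
    ((locallyFinite_of_finite Z).continuousOn_iUnion hZ fun k =>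
      (C.continuous_mem _ (hf k)).continuousOn.congr (hg k))
    (isConstructibleFunOn_iUnion hZC hf hg)
  exact ⟨θ, hθC, fun k x hx => (hθ x (mem_iUnion_of_mem k hx)).trans (hg k hx)⟩

end ConstructibleLGroup

section SignExtension

variable {X M ι : Type*}

structure IsSignCondition (O : ι → ι → Set X) : Prop where
  irrefl : ∀ i, O i i = ∅
  inter_subset : ∀ i j k, O i j ∩ O j k ⊆ O i k
  subset_union : ∀ i j k, O i k ⊆ O i j ∪ O j k

theorem IsSignCondition.comp {κ : Type*} {O : ι → ι → Set X} (hO : IsSignCondition O)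
    (e : κ → ι) : IsSignCondition fun i j => O (e i) (e j) :=
  ⟨fun _ => hO.irrefl _, fun _ _ _ => hO.inter_subset _ _ _,
    fun _ _ _ => hO.subset_union _ _ _⟩

/-- `U i` and `V i` stand for `O i m` and `O m i`, where `m` is a new index and
`O i j = {x | f i x < f j x}` for the old ones; the fields are the instances of (O1)–(O3)
that involve `m`. -/
structure IsSignExtension [LT M] (f : ι → X → M) (U V : ι → Set X) : Prop where
  disjoint : ∀ i, Disjoint (U i) (V i)
  upper_subset : ∀ i j, U i ⊆ {x | f i x < f j x} ∪ U j
  lower_subset : ∀ i j, V i ⊆ V j ∪ {x | f j x < f i x}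
  lt_subset : ∀ i j, {x | f i x < f j x} ⊆ U i ∪ V j

theorem IsSignCondition.isSignExtension {κ : Type*} [LT M] {O : κ → κ → Set X}
    (hO : IsSignCondition O) {e : ι → κ} {f : ι → X → M}
    (hOf : ∀ i j, O (e i) (e j) = {x | f i x < f j x}) (m : κ) :
    IsSignExtension f (fun i => O (e i) m) (fun i => O m (e i)) where
  disjoint i := disjoint_iff_inter_eq_empty.2 <| subset_empty_iff.1 <|
    (hO.irrefl (e i)) ▸ hO.inter_subset _ _ _
  upper_subset i j := hOf i j ▸ hO.subset_union _ _ _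
  lower_subset i j := hOf j i ▸ hO.subset_union _ _ _
  lt_subset i j := hOf i j ▸ hO.subset_union _ _ _

/-- The bound `a i x + a i x ≤ f i x + f j x` keeps `a i` below the midpoint of `f i` and `f j`,
so that upper and lower companions cannot cross (`IsSignExtension.upper_le_lower`). -/
structure IsUpperCompanion [Add M] [Preorder M] (f : ι → X → M) (U : ι → Set X)
    (a : ι → X → M) : Prop where
  eq_of_notMem : ∀ i, ∀ x ∉ U i, a i x = f i x
  lt_of_mem : ∀ i, ∀ x ∈ U i, f i x < a i x
  add_self_le : ∀ i j, ∀ x ∈ U i, x ∉ U j → a i x + a i x ≤ f i x + f j x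

structure IsLowerCompanion [Add M] [Preorder M] (f : ι → X → M) (V : ι → Set X)
    (b : ι → X → M) : Prop where
  eq_of_notMem : ∀ i, ∀ x ∉ V i, b i x = f i x
  lt_of_mem : ∀ i, ∀ x ∈ V i, b i x < f i x
  le_add_self : ∀ i j, ∀ x ∈ V i, x ∉ V j → f i x + f j x ≤ b i x + b i x

variable [LinearOrder M] {f : ι → X → M} {U V : ι → Set X} {x : X}

theorem mem_iff_of_forall_mem_union {v : M} (hcov : ∀ i, x ∈ U i ∪ V i)
    (hU : ∀ i, x ∈ U i → f i x < v) (hV : ∀ i, x ∈ V i → v < f i x) (i : ι) :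
    (x ∈ U i ↔ f i x < v) ∧ (x ∈ V i ↔ v < f i x) :=
  ⟨⟨hU i, fun hlt => (hcov i).resolve_right fun hx => lt_asymm hlt (hV i hx)⟩,
    ⟨hV i, fun hlt => (hcov i).resolve_left fun hx => lt_asymm hlt (hU i hx)⟩⟩

theorem IsSignExtension.eq_of_notMem_union (h : IsSignExtension f U V) {i j : ι}
    (hi : x ∉ U i ∪ V i) (hj : x ∉ U j ∪ V j) : f i x = f j x := by
  refine le_antisymm (not_lt.1 fun hlt => ?_) (not_lt.1 fun hlt => ?_)
  · rcases h.lt_subset j i hlt with hx | hx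
    exacts [hj (Or.inl hx), hi (Or.inr hx)]
  · rcases h.lt_subset i j hlt with hx | hx
    exacts [hi (Or.inl hx), hj (Or.inr hx)]

theorem IsSignExtension.mem_iff_of_notMem_union (h : IsSignExtension f U V) {l : ι}
    (hl : x ∉ U l ∪ V l) (i : ι) :
    (x ∈ U i ↔ f i x < f l x) ∧ (x ∈ V i ↔ f l x < f i x) :=
  ⟨⟨fun hx => (h.upper_subset i l hx).resolve_right fun hx' => hl (Or.inl hx'),
      fun hlt => (h.lt_subset i l hlt).resolve_right fun hx' => hl (Or.inr hx')⟩,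
    ⟨fun hx => (h.lower_subset i l hx).resolve_left fun hx' => hl (Or.inr hx'),
      fun hlt => (h.lt_subset l i hlt).resolve_left fun hx' => hl (Or.inl hx')⟩⟩

variable [AddCommGroup M] [IsOrderedAddMonoid M]

theorem IsUpperCompanion.neg {a : ι → X → M} (ha : IsUpperCompanion (fun i => -f i) V a) :
    IsLowerCompanion f V fun i => -a i where
  eq_of_notMem i x hx := by simp [ha.eq_of_notMem i x hx]
  lt_of_mem i x hx := neg_lt.2 (ha.lt_of_mem i x hx)
  le_add_self i j x hx hxj :=
    calc f i x + f j x = -(-f i x + -f j x) := by abel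
      _ ≤ -(a i x + a i x) := neg_le_neg (ha.add_self_le i j x hx hxj)
      _ = -a i x + -a i x := by abel

namespace IsSignExtension

variable {A B : ι → X → M}

theorem upper_le (h : IsSignExtension f U V) (hA : IsUpperCompanion f U A) {i l : ι}
    (hxV : x ∉ V i) (hxl : x ∉ U l ∪ V l) : A i x ≤ f l x := by
  by_cases hxU : x ∈ U i
  · exact le_of_add_self_le_add (hA.add_self_le i l x hxU fun hx => hxl (Or.inl hx))
      ((h.mem_iff_of_notMem_union hxl i).1.1 hxU).le
  · rw [hA.eq_of_notMem i x hxU]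
    exact (h.eq_of_notMem_union (not_or.2 ⟨hxU, hxV⟩) hxl).le

theorem le_lower (h : IsSignExtension f U V) (hB : IsLowerCompanion f V B) {j l : ι}
    (hxU : x ∉ U j) (hxl : x ∉ U l ∪ V l) : f l x ≤ B j x := by
  by_cases hxV : x ∈ V j
  · exact le_of_add_le_add_self (hB.le_add_self j l x hxV fun hx => hxl (Or.inr hx))
      ((h.mem_iff_of_notMem_union hxl j).2.1 hxV).le
  · rw [hB.eq_of_notMem j x hxV]
    exact (h.eq_of_notMem_union hxl (not_or.2 ⟨hxU, hxV⟩)).le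

theorem upper_le_lower (h : IsSignExtension f U V) (hA : IsUpperCompanion f U A)
    (hB : IsLowerCompanion f V B) {i j : ι} (hxU : x ∈ U i) (hxV : x ∈ V j) : A i x ≤ B j x :=
  le_of_add_self_le_add
    (calc A i x + A i x ≤ f i x + f j x :=
          hA.add_self_le i j x hxU fun hx => disjoint_left.1 (h.disjoint j) hx hxV
      _ = f j x + f i x := add_comm _ _
      _ ≤ B j x + B j x := hB.le_add_self j i x hxV (disjoint_left.1 (h.disjoint i) hxU))
    le_rfl

end IsSignExtension

end SignExtension

section SignCell

variable {X M ι : Type*} [DecidableEq ι] {U V : ι → Set X} {S : Finset ι} {x : X}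

def signCell (U V : ι → Set X) (S : Finset ι) : Set X :=
  ⋂ i, if i ∈ S then U i else V i

theorem signCell_subset_left {i : ι} (hi : i ∈ S) : signCell U V S ⊆ U i := fun _ hx => by
  simpa [hi] using mem_iInter.1 hx i

theorem signCell_subset_right {i : ι} (hi : i ∉ S) : signCell U V S ⊆ V i := fun _ hx => by
  simpa [hi] using mem_iInter.1 hx i

theorem mem_signCell (hS : ∀ i, i ∈ S ↔ x ∈ U i) (hcov : ∀ i, x ∈ U i ∪ V i) :
    x ∈ signCell U V S :=
  mem_iInter.2 fun i => by
    split_ifs with hi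
    exacts [(hS i).1 hi, (hcov i).resolve_left ((hS i).not.1 hi)]

theorem exists_mem_signCell [Fintype ι] (hcov : ∀ i, x ∈ U i ∪ V i) :
    ∃ S, x ∈ signCell U V S := by
  classical
  exact ⟨_, mem_signCell (S := Finset.univ.filter (x ∈ U ·)) (by simp) hcov⟩

theorem mem_iff_of_mem_signCell (hUV : ∀ i, Disjoint (U i) (V i)) (hx : x ∈ signCell U V S)
    (i : ι) : i ∈ S ↔ x ∈ U i :=
  ⟨fun hi => signCell_subset_left hi hx, fun hxU => by_contra fun hi =>
    disjoint_left.1 (hUV i) hxU (signCell_subset_right hi hx)⟩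

theorem notMem_of_mem_closure_signCell [TopologicalSpace X] (hUV : ∀ i, Disjoint (U i) (V i))
    (hU : ∀ i, IsOpen (U i)) (hV : ∀ i, IsOpen (V i)) (hx : x ∈ closure (signCell U V S)) :
    (∀ i ∈ S, x ∉ V i) ∧ ∀ i ∉ S, x ∉ U i :=
  ⟨fun i hi => disjoint_left.1 ((hUV i).closure_left (hV i))
      (closure_mono (signCell_subset_left hi) hx),
    fun i hi => disjoint_left.1 ((hUV i).symm.closure_left (hU i))
      (closure_mono (signCell_subset_right hi) hx)⟩

theorem mem_signCell_of_mem_closure [TopologicalSpace X] (hUV : ∀ i, Disjoint (U i) (V i))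
    (hU : ∀ i, IsOpen (U i)) (hV : ∀ i, IsOpen (V i)) (hx : x ∈ closure (signCell U V S))
    (hcov : ∀ i, x ∈ U i ∪ V i) : x ∈ signCell U V S :=
  have hx' := notMem_of_mem_closure_signCell hUV hU hV hx
  mem_signCell (fun i => ⟨fun hi => (hcov i).resolve_right (hx'.1 i hi),
    fun hxU => by_contra fun hi => hx'.2 i hi hxU⟩) hcov

variable [Fintype ι] [AddCommGroup M] [LinearOrder M] [IsOrderedAddMonoid M]
  {f A B : ι → X → M}

theorem IsSignExtension.signClamp_eq_of_mem_closure [TopologicalSpace X]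
    (h : IsSignExtension f U V) (hA : IsUpperCompanion f U A) (hB : IsLowerCompanion f V B)
    (hU : ∀ i, IsOpen (U i)) (hV : ∀ i, IsOpen (V i)) (hx : x ∈ closure (signCell U V S))
    {l : ι} (hl : x ∉ U l ∪ V l) : signClamp S (f l x) (A · x) (B · x) = f l x :=
  have hx' := notMem_of_mem_closure_signCell h.disjoint hU hV hx
  signClamp_eq_self (fun i hi => h.upper_le hA (hx'.1 i hi) hl)
    fun j hj => h.le_lower hB (hx'.2 j hj) hl

theorem IsSignExtension.lt_signClamp (h : IsSignExtension f U V) (hA : IsUpperCompanion f U A)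
    (hB : IsLowerCompanion f V B) (hx : x ∈ signCell U V S) (t : M) :
    (∀ i ∈ S, f i x < signClamp S t (A · x) (B · x)) ∧
      ∀ j ∉ S, signClamp S t (A · x) (B · x) < f j x := by
  have hpair : ∀ i ∈ S, ∀ j ∉ S, A i x ≤ B j x := fun i hi j hj =>
    h.upper_le_lower hA hB (signCell_subset_left hi hx) (signCell_subset_right hj hx)
  exact ⟨fun i hi => (hA.lt_of_mem i x (signCell_subset_left hi hx)).trans_le
      (le_signClamp hpair hi),
    fun j hj => (signClamp_le hj).trans_lt (hB.lt_of_mem j x (signCell_subset_right hj hx))⟩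

theorem IsSignExtension.eq_setOf_of_eqOn (h : IsSignExtension f U V)
    (hA : IsUpperCompanion f U A) (hB : IsLowerCompanion f V B) {Θ g : X → M}
    (hΘ : ∀ l, EqOn Θ (f l) (U l ∪ V l)ᶜ) (hgΘ : EqOn g Θ (⋃ l, (U l ∪ V l)ᶜ))
    (hg : ∀ S, ∀ x ∈ signCell U V S, g x = signClamp S (Θ x) (A · x) (B · x)) (i : ι) :
    U i = {x | f i x < g x} ∧ V i = {x | g x < f i x} := by
  suffices ∀ x, (x ∈ U i ↔ f i x < g x) ∧ (x ∈ V i ↔ g x < f i x) from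
    ⟨ext fun x => (this x).1, ext fun x => (this x).2⟩
  intro x
  by_cases hxT : x ∈ ⋃ l, (U l ∪ V l)ᶜ
  · obtain ⟨l, hl⟩ := mem_iUnion.1 hxT
    rw [hgΘ hxT, hΘ l hl]
    exact h.mem_iff_of_notMem_union hl i
  · have hcov : ∀ j, x ∈ U j ∪ V j := fun j =>
      by_contra fun hj => hxT (mem_iUnion_of_mem j hj)
    obtain ⟨S, hxS⟩ := exists_mem_signCell hcov
    have hS := mem_iff_of_mem_signCell h.disjoint hxS
    have hlt := h.lt_signClamp hA hB hxS (Θ x)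
    rw [hg S x hxS]
    exact mem_iff_of_forall_mem_union hcov (fun j hj => hlt.1 j ((hS j).2 hj))
      (fun j hj => hlt.2 j fun hjS => disjoint_left.1 (h.disjoint j) ((hS j).1 hjS) hj) i

end SignCell

namespace ConstructibleLGroup

variable {C : ConstructibleLGroup X M} {ι : Type*}

theorem mem_of_eqOn_signCell [Fintype ι] [DecidableEq ι] {U V : ι → Set X}
    (hU : ∀ i, IsCozeroSetOf C.carrier (U i)) (hV : ∀ i, IsCozeroSetOf C.carrier (V i))
    {Θ : X → M} {A B : ι → X → M} (hΘC : Θ ∈ C.carrier) (hAC : ∀ i, A i ∈ C.carrier)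
    (hBC : ∀ i, B i ∈ C.carrier) {g : X → M} (hgΘ : EqOn g Θ (⋃ l, (U l ∪ V l)ᶜ))
    (hg : ∀ S, EqOn g (signClamp S Θ A B) (closure (signCell U V S))) : g ∈ C.carrier := by
  have hZ : ∀ l, IsClosed (U l ∪ V l)ᶜ := fun l =>
    ((isOpen_of_isCozeroSetOf (hU l)).union (isOpen_of_isCozeroSetOf (hV l))).isClosed_compl
  refine C.mem_of_eqOn_cover
    (A := fun o : Option (Finset ι) =>
      o.elim (⋃ l, (U l ∪ V l)ᶜ) fun S => closure (signCell U V S))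
    (f := fun o => o.elim Θ fun S => signClamp S Θ A B) ?_ ?_ ?_ ?_ ?_
  · rintro (_ | S)
    exacts [isClosed_iUnion_of_finite hZ, isClosed_closure]
  · rintro (_ | S)
    · exact C.isConstructibleIn_iUnion fun l =>
        ((hU l).isConstructibleIn.union (hV l).isConstructibleIn).compl
    · exact C.isConstructibleIn_closure_iInter fun i => by
        split_ifs
        exacts [hU i, hV i]
  · refine eq_univ_of_forall fun x => ?_
    by_cases hxT : x ∈ ⋃ l, (U l ∪ V l)ᶜ
    · exact mem_iUnion_of_mem none hxT
    · obtain ⟨S, hxS⟩ := exists_mem_signCell (U := U) (V := V) fun j =>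
        by_contra fun hj => hxT (mem_iUnion_of_mem j hj)
      exact mem_iUnion_of_mem (some S) (subset_closure hxS)
  · rintro (_ | S)
    exacts [hΘC, signClamp_mem C.supClosed C.infClosed hΘC hAC hBC]
  · rintro (_ | S)
    exacts [hgΘ, hg S]

variable [Finite ι] {f : ι → X → M}

theorem exists_gap (hf : ∀ i, f i ∈ C.carrier) {U : ι → Set X}
    (hU : ∀ i, IsCozeroSetOf C.carrier (U i)) (hfU : ∀ i j, U i ⊆ {x | f i x < f j x} ∪ U j)
    (i : ι) :
    ∃ δ ∈ C.carrier, (∀ x ∉ U i, δ x = 0) ∧ (∀ x ∈ U i, 0 < δ x) ∧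
      ∀ j, ∀ x ∈ U i, x ∉ U j → δ x ≤ f j x - f i x := by
  have := Fintype.ofFinite ι
  choose φ hφC hφ0 hφU using fun j => exists_nonneg_of_isCozeroSetOf (hU j)
  have hφ_pos : ∀ j x, x ∈ U j ↔ 0 < φ j x := fun j x => by rw [hφU]; rfl
  have hφ_zero : ∀ j, ∀ x ∉ U j, φ j x = 0 := fun j x hx =>
    le_antisymm (not_lt.1 fun h => hx ((hφ_pos j x).2 h)) (hφ0 j x)
  have hlt : ∀ j, ∀ x ∈ U i, x ∉ U j → f i x < f j x := fun j x hx hxj =>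
    (hfU i j hx).resolve_right hxj
  -- on `U i \ U j` the `j`-th term is `f j - f i`, because `φ j` vanishes there
  let δ : X → M := Finset.univ.fold (· ⊓ ·) (φ i) fun j => (f j - f i) ⊔ φ j
  have hδ : ∀ x, δ x = Finset.univ.fold min (φ i x) fun j => (f j x - f i x) ⊔ φ j x :=
    fun x => (Finset.fold_hom (op := ((· ⊓ ·) : (X → M) → _)) (op' := min) (m := (· x))
      fun _ _ => rfl).symm
  have hδ_nonneg : ∀ x, 0 ≤ δ x := fun x => by
    rw [hδ]
    exact (Finset.le_fold_min _).2 ⟨hφ0 i x, fun j _ => le_sup_of_le_right (hφ0 j x)⟩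
  refine ⟨δ, Finset.fold_mem_of_forall_mem (fun _ ha _ hb => C.inf_mem _ ha _ hb) (hφC i)
      fun j _ => C.sup_mem _ (sub_mem (hf j) (hf i)) _ (hφC j),
    fun x hx => ?_, fun x hx => ?_, fun j x hx hxj => ?_⟩
  · refine le_antisymm ?_ (hδ_nonneg x)
    rw [hδ, ← hφ_zero i x hx]
    exact (Finset.fold_min_le _).2 (Or.inl le_rfl)
  · rw [hδ]
    refine (Finset.lt_fold_min _).2 ⟨(hφ_pos i x).1 hx, fun j _ => ?_⟩
    by_cases hxj : x ∈ U j
    · exact lt_sup_of_lt_right ((hφ_pos j x).1 hxj)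
    · exact lt_sup_of_lt_left (sub_pos.2 (hlt j x hx hxj))
  · rw [hδ]
    refine (Finset.fold_min_le _).2 (Or.inr ⟨j, Finset.mem_univ j, ?_⟩)
    rw [hφ_zero j x hxj, sup_eq_left.2 (sub_nonneg.2 (hlt j x hx hxj).le)]

theorem exists_isUpperCompanion (hf : ∀ i, f i ∈ C.carrier) {U : ι → Set X}
    (hU : ∀ i, IsCozeroSetOf C.carrier (U i)) (hfU : ∀ i j, U i ⊆ {x | f i x < f j x} ∪ U j) :
    ∃ a : ι → X → M, (∀ i, a i ∈ C.carrier) ∧ IsUpperCompanion f U a := by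
  choose δ hδC hδ_zero hδ_pos hδ_le using exists_gap hf hU hfU
  refine ⟨fun i => f i + (2⁻¹ : ℚ) • δ i,
    fun i => C.add_mem _ (hf i) _ (C.smul_mem _ _ (hδC i)),
    ⟨fun i x hx => ?_, fun i x hx => ?_, fun i j x hx hxj => ?_⟩⟩ <;>
    simp only [Pi.add_apply, Pi.smul_apply]
  · rw [hδ_zero i x hx, smul_zero, add_zero]
  · exact lt_add_of_pos_right _ (inv_two_smul_pos (hδ_pos i x hx))
  · calc f i x + (2⁻¹ : ℚ) • δ i x + (f i x + (2⁻¹ : ℚ) • δ i x)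
        = f i x + f i x + ((2⁻¹ : ℚ) • δ i x + (2⁻¹ : ℚ) • δ i x) := by abel
      _ ≤ f i x + f i x + (f j x - f i x) := by
        rw [inv_two_smul_add_inv_two_smul]
        exact add_le_add le_rfl (hδ_le i j x hx hxj)
      _ = f i x + f j x := by abel

theorem exists_isLowerCompanion (hf : ∀ i, f i ∈ C.carrier) {V : ι → Set X}
    (hV : ∀ i, IsCozeroSetOf C.carrier (V i)) (hfV : ∀ i j, V i ⊆ V j ∪ {x | f j x < f i x}) :
    ∃ b : ι → X → M, (∀ i, b i ∈ C.carrier) ∧ IsLowerCompanion f V b := by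
  obtain ⟨a, haC, ha⟩ := exists_isUpperCompanion (f := fun i => -f i)
    (fun i => C.neg_mem _ (hf i)) hV fun i j x hx => (hfV i j hx).symm.imp neg_lt_neg id
  exact ⟨fun i => -a i, fun i => C.neg_mem _ (haC i), ha.neg⟩

theorem exists_mem_of_isSignExtension (hf : ∀ i, f i ∈ C.carrier)
    {U V : ι → Set X} (hU : ∀ i, IsCozeroSetOf C.carrier (U i))
    (hV : ∀ i, IsCozeroSetOf C.carrier (V i)) (h : IsSignExtension f U V) :
    ∃ g ∈ C.carrier, ∀ i, U i = {x | f i x < g x} ∧ V i = {x | g x < f i x} := by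
  classical
  have := Fintype.ofFinite ι
  have hUo i := isOpen_of_isCozeroSetOf (hU i)
  have hVo i := isOpen_of_isCozeroSetOf (hV i)
  obtain ⟨A, hAC, hA⟩ := exists_isUpperCompanion hf hU h.upper_subset
  obtain ⟨B, hBC, hB⟩ := exists_isLowerCompanion hf hV h.lower_subset
  obtain ⟨Θ, hΘC, hΘ⟩ := C.exists_mem_eqOn_of_isClosed (Z := fun l => (U l ∪ V l)ᶜ)
    (fun l => ((hUo l).union (hVo l)).isClosed_compl)
    (fun l => ((hU l).isConstructibleIn.union (hV l).isConstructibleIn).compl) hf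
    fun k l x hx => h.eq_of_notMem_union hx.1 hx.2
  let T := ⋃ l, (U l ∪ V l)ᶜ
  let P (x : X) : Finset ι := Finset.univ.filter (x ∈ U ·)
  let g (x : X) : M := if x ∈ T then Θ x else signClamp (P x) Θ A B x
  have hgΘ : EqOn g Θ T := fun x hx => if_pos hx
  have hg : ∀ S, EqOn g (signClamp S Θ A B) (closure (signCell U V S)) := by
    intro S x hx
    by_cases hxT : x ∈ T
    · obtain ⟨l, hl⟩ := mem_iUnion.1 hxT
      rw [hgΘ hxT, signClamp_apply, hΘ l hl,
        h.signClamp_eq_of_mem_closure hA hB hUo hVo hx hl]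
    · have hxS := mem_signCell_of_mem_closure h.disjoint hUo hVo hx fun j =>
        by_contra fun hj => hxT (mem_iUnion_of_mem j hj)
      have hP : P x = S := Finset.ext fun i => by
        simp [P, mem_iff_of_mem_signCell h.disjoint hxS i]
      simp only [g, if_neg hxT, hP]
  exact ⟨g, mem_of_eqOn_signCell hU hV hΘC hAC hBC hgΘ hg, h.eq_setOf_of_eqOn hA hB hΘ hgΘ
    fun S x hx => (hg S (subset_closure hx)).trans (signClamp_apply S Θ A B x)⟩


theorem exists_snoc {n : ℕ} {O : Fin (n + 1) → Fin (n + 1) → Set X}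
    (hcoz : ∀ i j, IsCozeroSetOf C.carrier (O i j)) (hO : IsSignCondition O)
    {f : Fin n → X → M} (hf : ∀ i, f i ∈ C.carrier)
    (hOf : ∀ i j, O i.castSucc j.castSucc = {x | f i x < f j x}) :
    ∃ g : Fin (n + 1) → X → M, (∀ i, g i ∈ C.carrier) ∧ (∀ i, g i.castSucc = f i) ∧
      ∀ i j, O i j = {x | g i x < g j x} := by
  obtain ⟨g, hgC, hg⟩ := exists_mem_of_isSignExtension hf (fun _ => hcoz _ _)
    (fun _ => hcoz _ _) (hO.isSignExtension hOf (Fin.last n))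
  refine ⟨Fin.snoc f g, Fin.lastCases (by simpa) (by simpa), fun i => Fin.snoc_castSucc .., ?_⟩
  intro i j
  induction i using Fin.lastCases <;> induction j using Fin.lastCases <;>
    simp [hO.irrefl, hg, hOf]

theorem exists_extension {n k : ℕ} {O : Fin (n + k) → Fin (n + k) → Set X}
    (hcoz : ∀ i j, IsCozeroSetOf C.carrier (O i j)) (hO : IsSignCondition O)
    {f : Fin n → X → M} (hf : ∀ i, f i ∈ C.carrier)
    (hOf : ∀ i j, O (Fin.castAdd k i) (Fin.castAdd k j) = {x | f i x < f j x}) :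
    ∃ g : Fin (n + k) → X → M, (∀ i, g i ∈ C.carrier) ∧ (∀ i, g (Fin.castAdd k i) = f i) ∧
      ∀ i j, O i j = {x | g i x < g j x} := by
  induction k with
  | zero => exact ⟨f, hf, fun _ => rfl, hOf⟩
  | succ k ih =>
    obtain ⟨g, hgC, hgf, hgO⟩ := ih (fun _ _ => hcoz _ _) (hO.comp Fin.castSucc) hOf
    obtain ⟨g', hg'C, hg'g, hg'O⟩ := exists_snoc hcoz hO hgC hgO
    exact ⟨g', hg'C, fun i => (hg'g _).trans (hgf i), hg'O⟩

end ConstructibleLGroup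

theorem stmt_7_general {X M : Type*} [TopologicalSpace X] [T2Space X]
    [AddCommGroup M] [LinearOrder M] [IsOrderedAddMonoid M] [Module ℚ M] [TopologicalSpace M] [OrderTopology M]
    (C : ConstructibleLGroup X M) (n k : ℕ)
    (O : Fin (n + k) → Fin (n + k) → Set X)
    (hcoz : ∀ i j, IsCozeroSetOf C.carrier (O i j))
    (hO1 : ∀ i, O i i = ∅)
    (hO2 : ∀ i j l, O i j ∩ O j l ⊆ O i l)
    (hO3 : ∀ i j l, O i l ⊆ O i j ∪ O j l)
    (f : Fin n → X → M) (hf : ∀ i, f i ∈ C.carrier)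
    (hOf : ∀ i j : Fin n, O (Fin.castAdd k i) (Fin.castAdd k j) = {x | f i x < f j x}) :
    ∃ g : Fin (n + k) → X → M,
      (∀ i, g i ∈ C.carrier) ∧
      (∀ i : Fin n, g (Fin.castAdd k i) = f i) ∧
      (∀ i j, O i j = {x | g i x < g j x}) :=
  C.exists_extension hcoz ⟨hO1, hO2, hO3⟩ hf hOf

/-- Proposition 2.4 of the paper: an open sign condition consisting of
`C`-cozero sets whose first `n × n` block is realized by `f₁, …, fₙ ∈ C` is realized
by `f₁, …, f_{n+k} ∈ C`. -/
theorem stmt_7 {X M : Type*} [TopologicalSpace X] [T2Space X]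
    [AddCommGroup M] [LinearOrder M] [IsOrderedAddMonoid M] [Module ℚ M] [TopologicalSpace M] [OrderTopology M]
    (C : ConstructibleLGroup X M) (n k : ℕ)
    (O : Fin (n + k) → Fin (n + k) → Set X)
    (hopen : ∀ i j, IsOpen (O i j))
    (hcoz : ∀ i j, IsCozeroSetOf C.carrier (O i j))
    (hO1 : ∀ i, O i i = ∅)
    (hO2 : ∀ i j l, O i j ∩ O j l ⊆ O i l)
    (hO3 : ∀ i j l, O i l ⊆ O i j ∪ O j l)
    (f : Fin n → X → M) (hf : ∀ i, f i ∈ C.carrier)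
    (hOf : ∀ i j : Fin n, O (Fin.castAdd k i) (Fin.castAdd k j) = {x | f i x < f j x}) :
    ∃ g : Fin (n + k) → X → M,
      (∀ i, g i ∈ C.carrier) ∧
      (∀ i : Fin n, g (Fin.castAdd k i) = f i) ∧
      (∀ i j, O i j = {x | g i x < g j x}) :=
  stmt_7_general C n k O hcoz hO1 hO2 hO3 f hf hOf
end

section
/- Let M be a linearly ordered additive abelian group that is a ℚ-vector space, equipped with its order topology, let e ∈ M with e > 0, and let b ∈ M with b > q•e for every rational q. Then there is no continuous function f : [0, e] → M (with the subspace topology on the interval [0, e] = {x ∈ M : 0 ≤ x ≤ e}) such that f(0) = 0, f(e) = b, and f is piecewise ℚ-affine with respect to a finite cover of [0, e] by intervals of M: i.e., such that there exist finitely many intervals I_1, …, I_k of M (intervals with endpoints in M or unbounded) covering [0, e], rationals q_1, …, q_k and elements c_1, …, c_k ∈ M with f(x) = q_i•x + c_i for all x ∈ I_i ∩ [0, e] and each i. -/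
open Set

/-- An interval of a linear order `M`: a set of one of the forms
`(a,b), [a,b], (a,b], [a,b), (a,∞), [a,∞), (−∞,a), (−∞,a], (−∞,∞)`
with endpoints in `M`. -/
def IsIntervalOf {M : Type*} [LinearOrder M] (I : Set M) : Prop :=
  (∃ a b : M, I = Ioo a b) ∨ (∃ a b : M, I = Icc a b) ∨
  (∃ a b : M, I = Ioc a b) ∨ (∃ a b : M, I = Ico a b) ∨
  (∃ a : M, I = Ioi a) ∨ (∃ a : M, I = Ici a) ∨
  (∃ a : M, I = Iio a) ∨ (∃ a : M, I = Iic a) ∨ I = univ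

/-!
Let `H` be the subgroup of elements bounded by some `n • e`, i.e. the closed ball of the
Archimedean class of `e`. It contains `(-e, e)`, so it is open and `M ⧸ H` is discrete; hence
`φ x = f x + H` is locally constant. On a piece `f x = q • x + c` with `q • x ∈ H`, so `φ` is
constant on each interval of the cover. Between two consecutive endpoints of the cover `φ` is
therefore constant, and since `M` is densely ordered, local constancy carries this value to both
endpoints. Walking through the finitely many endpoints gives `φ 0 = φ e`, i.e. `b ∈ H`,
which contradicts `q • e < b` for all `q`.
-/

open Filter Topology ArchimedeanClass

section RatModule

variable {M : Type*} [AddCommGroup M] [LinearOrder M] [IsOrderedAddMonoid M] [Module ℚ M]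

theorem Rat.smul_nonneg {q : ℚ} (hq : 0 ≤ q) {x : M} (hx : 0 ≤ x) : 0 ≤ q • x := by
  have hden : (q.den : ℚ) • q • x = q.num • x := by
    rw [smul_smul, Rat.den_mul_eq_num, Int.cast_smul_eq_zsmul]
  rw [← nsmul_nonneg_iff q.den_ne_zero, ← Nat.cast_smul_eq_nsmul ℚ, hden]
  exact zsmul_nonneg hx (Rat.num_nonneg.2 hq)

instance Rat.posSMulMono : PosSMulMono ℚ M :=
  PosSMulMono.of_smul_nonneg fun _ hq _ hx ↦ Rat.smul_nonneg hq hx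

instance Rat.denselyOrdered_of_module : DenselyOrdered M where
  dense x y hxy := by
    have := PosSMulMono.toPosSMulStrictMono (α := ℚ) (β := M)
    refine ⟨(2⁻¹ : ℚ) • (x + y), ?_, ?_⟩
    · calc x = (2⁻¹ : ℚ) • (x + x) := by module
        _ < (2⁻¹ : ℚ) • (x + y) := smul_lt_smul_of_pos_left (by simpa) (by norm_num)
    · calc (2⁻¹ : ℚ) • (x + y) < (2⁻¹ : ℚ) • (y + y) :=
            smul_lt_smul_of_pos_left (by simpa) (by norm_num)
        _ = y := by module

end RatModule

theorem ArchimedeanClass.isOpen_closedBallAddSubgroup_mk {M : Type*} [AddCommGroup M]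
    [LinearOrder M] [IsOrderedAddMonoid M] [TopologicalSpace M] [OrderTopology M] {e : M}
    (he : e ≠ 0) : IsOpen ((closedBallAddSubgroup (mk e) : AddSubgroup M) : Set M) := by
  refine AddSubgroup.isOpen_of_mem_nhds _ (g := 0) (mem_of_superset
    (Ioo_mem_nhds (neg_lt_zero.2 (abs_pos.2 he)) (abs_pos.2 he)) fun x hx ↦ ?_)
  exact mem_closedBallAddSubgroup_iff.2 (mk_le_mk_of_abs (abs_lt.2 hx).le)

theorem IsIntervalOf.exists_finset_mem_uIcc {M : Type*} [LinearOrder M] {I : Set M}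
    (hI : IsIntervalOf I) : ∃ s : Finset M, ∀ x ∈ I, ∀ y ∉ I, ∃ t ∈ s, t ∈ uIcc x y := by
  rcases hI with ⟨a, b, rfl⟩ | ⟨a, b, rfl⟩ | ⟨a, b, rfl⟩ | ⟨a, b, rfl⟩ |
    ⟨a, rfl⟩ | ⟨a, rfl⟩ | ⟨a, rfl⟩ | ⟨a, rfl⟩ | rfl
  all_goals first
    | refine ⟨{a, b}, fun x hx y hy ↦ ?_⟩
    | refine ⟨{a}, fun x hx y hy ↦ ?_⟩
    | exact ⟨∅, fun x _ y hy ↦ absurd (mem_univ y) hy⟩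
  all_goals
    simp only [mem_Ioo, mem_Icc, mem_Ioc, mem_Ico, mem_Ioi, mem_Ici, mem_Iio, mem_Iic,
      not_and_or, not_lt, not_le] at hx hy
    simp only [Finset.mem_insert, Finset.mem_singleton, exists_eq_or_imp, exists_eq_left,
      mem_uIcc]
    grind

theorem Finset.apply_eq_apply_of_forall_consecutive {α β : Type*} [LinearOrder α] {φ : α → β}
    (T : Finset α) (h : ∀ s ∈ T, ∀ t ∈ T, s < t → (∀ u ∈ T, u ∉ Set.Ioo s t) → φ s = φ t) :
    ∀ s ∈ T, ∀ t ∈ T, φ s = φ t := by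
  classical
  induction T using Finset.induction_on_max with
  | empty => simp
  | insert x T hlt ih =>
    have ih := ih fun s hs t ht hst hgap ↦ h s (mem_insert_of_mem hs) t (mem_insert_of_mem ht)
      hst fun u hu ↦ (mem_insert.1 hu).elim (fun hux hu' ↦ (hlt t ht).not_gt (hux ▸ hu'.2))
        (hgap u)
    suffices hx : ∀ s ∈ insert x T, φ s = φ x from
      fun s hs t ht ↦ (hx s hs).trans (hx t ht).symm
    intro s hs
    rcases mem_insert.1 hs with rfl | hs
    · rfl
    have hmax := T.max'_mem ⟨s, hs⟩
    refine (ih s hs _ hmax).trans (h _ (mem_insert_of_mem hmax) x (mem_insert_self x T)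
      (hlt _ hmax) fun u hu hu' ↦ ?_)
    rcases mem_insert.1 hu with rfl | hu
    · exact hu'.2.false
    · exact (T.le_max' u hu).not_gt hu'.1

section LocallyConstant

variable {X β : Type*} [LinearOrder X] [TopologicalSpace X] [OrderTopology X] [DenselyOrdered X]
  {φ : X → β}

theorem IsLocallyConstant.apply_eq_apply_of_forall_Ioo (hφ : IsLocallyConstant φ) {s t : X}
    (hst : s < t) (h : ∀ x ∈ Ioo s t, ∀ y ∈ Ioo s t, φ x = φ y) : φ s = φ t := by
  have := left_nhdsWithin_Ioo_neBot hst
  have := right_nhdsWithin_Ioo_neBot hst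
  obtain ⟨x, hxs, hx⟩ :=
    ((hφ.eventually_eq s).filter_mono (nhdsWithin_le_nhds (s := Ioo s t))).and
      self_mem_nhdsWithin |>.exists
  obtain ⟨y, hyt, hy⟩ :=
    ((hφ.eventually_eq t).filter_mono (nhdsWithin_le_nhds (s := Ioo s t))).and
      self_mem_nhdsWithin |>.exists
  rw [← hxs, ← hyt]
  exact h x hx y hy

theorem IsLocallyConstant.apply_eq_of_isIntervalOf_cover (hφ : IsLocallyConstant φ) {a b : X}
    (hab : a ≤ b) {ι : Type*} [Fintype ι] {I : ι → Set X} (hI : ∀ i, IsIntervalOf (I i))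
    (hcover : Icc a b ⊆ ⋃ i, I i)
    (hconst : ∀ i, ∀ x ∈ I i ∩ Icc a b, ∀ y ∈ I i ∩ Icc a b, φ x = φ y) : φ a = φ b := by
  classical
  choose s hs using fun i ↦ (hI i).exists_finset_mem_uIcc
  set T := (insert a (insert b (Finset.univ.biUnion s))).filter (· ∈ Icc a b)
  have hmem : ∀ i, ∀ t ∈ s i, t ∈ Icc a b → t ∈ T := fun i t ht htab ↦
    Finset.mem_filter.2 ⟨by simp only [Finset.mem_insert, Finset.mem_biUnion]; grind, htab⟩
  refine T.apply_eq_apply_of_forall_consecutive (fun u hu v hv huv hgap ↦ ?_) a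
    (by simp [T, hab]) b (by simp [T, hab])
  have hsub : Ioo u v ⊆ Icc a b := fun x hx ↦
    ⟨(Finset.mem_filter.1 hu).2.1.trans hx.1.le, hx.2.le.trans (Finset.mem_filter.1 hv).2.2⟩
  refine hφ.apply_eq_apply_of_forall_Ioo huv fun x hx y hy ↦ ?_
  obtain ⟨i, hxi⟩ := mem_iUnion.1 (hcover (hsub hx))
  -- an endpoint of `I i` between `x` and `y` would be a point of `T` inside the gap `(u, v)`
  have hyi : y ∈ I i := by
    by_contra hyi
    obtain ⟨t, hts, ht⟩ := hs i x hxi y hyi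
    have htuv : t ∈ Ioo u v := ordConnected_Ioo.uIcc_subset hx hy ht
    exact hgap t (hmem i t hts (hsub htuv)) htuv
  exact hconst i x ⟨hxi, hsub hx⟩ y ⟨hyi, hsub hy⟩

end LocallyConstant

/-- footnote 2 of the paper: if `e > 0` and `b > q • e` for every
rational `q`, then there is no continuous function `f : [0,e] → M` with
`f 0 = 0`, `f e = b` which is piecewise `ℚ`-affine with respect to a finite
cover of `[0,e]` by intervals of `M`. -/
theorem stmt_17 {M : Type*} [AddCommGroup M] [LinearOrder M] [IsOrderedAddMonoid M] [Module ℚ M]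
    [TopologicalSpace M] [OrderTopology M]
    (e b : M) (he : 0 < e) (hb : ∀ q : ℚ, q • e < b) :
    ¬ ∃ f : Icc (0 : M) e → M, Continuous f ∧
        f ⟨0, left_mem_Icc.2 he.le⟩ = 0 ∧
        f ⟨e, right_mem_Icc.2 he.le⟩ = b ∧
        ∃ (k : ℕ) (I : Fin k → Set M) (q : Fin k → ℚ) (c : Fin k → M),
          (∀ i, IsIntervalOf (I i)) ∧
          (∀ x : Icc (0 : M) e, ∃ i, (x : M) ∈ I i) ∧
          (∀ i, ∀ x : Icc (0 : M) e, (x : M) ∈ I i → f x = q i • (x : M) + c i) := by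
  rintro ⟨f, hf, hf0, hfe, k, I, q, c, hI, hcover, haff⟩
  set H := closedBallAddSubgroup (mk e)
  have := QuotientAddGroup.discreteTopology (isOpen_closedBallAddSubgroup_mk he.ne')
  set φ : M → M ⧸ H := fun x ↦ ((IccExtend he.le f x : M) : M ⧸ H)
  have hφ : IsLocallyConstant φ :=
    (IsLocallyConstant.iff_continuous φ).2 (QuotientAddGroup.continuous_mk.comp hf.Icc_extend')
  have hpiece : ∀ i, ∀ x ∈ I i ∩ Icc 0 e, φ x = c i := by
    rintro i x ⟨hxI, hx⟩
    have hqx : q i • x ∈ H := mem_closedBallAddSubgroup_iff.2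
      ((mk_antitoneOn hx.1 he.le hx.2).trans (mk_le_mk_smul x (q i)))
    simp only [φ, IccExtend_of_mem he.le f hx, haff i ⟨x, hx⟩ hxI, QuotientAddGroup.mk_add,
      (QuotientAddGroup.eq_zero_iff _).2 hqx, zero_add]
  have hφ0e : φ 0 = φ e := hφ.apply_eq_of_isIntervalOf_cover he.le hI
    (fun x hx ↦ mem_iUnion.2 (hcover ⟨x, hx⟩))
    fun i x hx y hy ↦ (hpiece i x hx).trans (hpiece i y hy).symm
  have hbH : b ∈ H := by
    simpa [φ, hf0, hfe, eq_comm (a := (0 : M ⧸ H))] using hφ0e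
  have hb0 : 0 < b := by simpa using hb 0
  refine (mem_closedBallAddSubgroup_iff.1 hbH).not_gt (mk_lt_mk.2 fun n ↦ ?_)
  simpa [abs_of_pos he, abs_of_pos hb0, Nat.cast_smul_eq_nsmul] using hb n
end
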